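/- arXiv:2108.02844 — 5 statements merged into one kernel-verified Lean document; each statement's English description precedes it below -/
import Mathlib

section
/- Let G be a Lie group with a left invariant Riemannian metric and Riemannian distance d. Then for all a, b, g in G, d(ag, bg) ≤ R(g) · d(a,b), where R(g) = ‖(dR_g)_e‖ is the operator norm of the differential of right translation by g at the identity. -/
/- STATEMENT 2: Let `G` be a Lie group with a left invariant Riemannian metric (determined by an
inner product on the Lie algebra `E = T₁G`) and Riemannian distance `d` (the infimum of lengths
of smooth paths, lengths being measured with the left invariant metric).  Then for all
`a, b, g ∈ G`, `d(ag, bg) ≤ R(g) · d(a,b)`, where `R(g) = ‖(dR_g)_1‖` is the metric operator norm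
of the differential at the identity of right translation by `g`, i.e. the operator norm of
`d(L_{g⁻¹})_g ∘ (dR_g)_1 : E → E`. -/

open scoped Manifold

/-- Length of a path in `G`, measured with the left invariant metric: the norm of the velocity
left-translated to the identity. -/
noncomputable def leftInvPathLength {E : Type*} [NormedAddCommGroup E] [InnerProductSpace ℝ E]
    {G : Type*} [TopologicalSpace G] [ChartedSpace E G] [Group G] [LieGroup 𝓘(ℝ, E) (⊤ : ℕ∞) G]
    (c : ℝ → G) : ℝ :=
  ∫ t in (0:ℝ)..1,
    ‖(show E from mfderiv 𝓘(ℝ, E) 𝓘(ℝ, E) (fun y => (c t)⁻¹ * y) (c t)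
        (mfderiv 𝓘(ℝ, ℝ) 𝓘(ℝ, E) c t (show TangentSpace 𝓘(ℝ, ℝ) t from (1 : ℝ))))‖

/-- The Riemannian distance of the left invariant metric: infimum of lengths of smooth paths. -/
noncomputable def leftInvDist {E : Type*} [NormedAddCommGroup E] [InnerProductSpace ℝ E]
    {G : Type*} [TopologicalSpace G] [ChartedSpace E G] [Group G] [LieGroup 𝓘(ℝ, E) (⊤ : ℕ∞) G]
    (a b : G) : ℝ :=
  sInf {L | ∃ c : ℝ → G, ContMDiff 𝓘(ℝ, ℝ) 𝓘(ℝ, E) 1 c ∧ c 0 = a ∧ c 1 = b ∧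
    L = leftInvPathLength (E := E) c}

/-- `R(g) = ‖(dR_g)_1‖`, the metric operator norm of the differential of right translation. -/
noncomputable def rightTransNorm {E : Type*} [NormedAddCommGroup E] [InnerProductSpace ℝ E]
    {G : Type*} [TopologicalSpace G] [ChartedSpace E G] [Group G] [LieGroup 𝓘(ℝ, E) (⊤ : ℕ∞) G]
    (g : G) : ℝ :=
  ‖(show E →L[ℝ] E from (mfderiv 𝓘(ℝ, E) 𝓘(ℝ, E) (fun y => g⁻¹ * y) g).comp
      (mfderiv 𝓘(ℝ, E) 𝓘(ℝ, E) (fun y => y * g) 1))‖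


/-! Right translation by `g` turns a smooth path `c` from `a` to `b` into the path `c · g` from
`a g` to `b g`. Its left-trivialised velocity `(c t g)⁻¹ (c t g)'` is `g⁻¹ ((c t)⁻¹ c' t) g`, the
image of the left-trivialised velocity of `c` under `d(L_{g⁻¹})_g ∘ (dR_g)_1`; hence the length of
`c · g` is at most `R(g)` times the length of `c`, and passing to infima gives the inequality. -/

open Pointwise in
theorem Real.sInf_le_mul_sInf {S T : Set ℝ} {r : ℝ} (hr : 0 ≤ r) (hT : BddBelow T)
    (hTS : T.Nonempty → S.Nonempty) (h : ∀ x ∈ S, ∃ y ∈ T, y ≤ r * x) :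
    sInf T ≤ r * sInf S := by
  rcases S.eq_empty_or_nonempty with rfl | hS
  · rw [Set.not_nonempty_iff_eq_empty.mp (mt hTS Set.not_nonempty_empty), Real.sInf_empty,
      mul_zero]
  calc sInf T ≤ sInf (r • S) := by
        refine le_csInf hS.smul_set ?_
        rintro _ ⟨x, hx, rfl⟩
        obtain ⟨y, hy, hyx⟩ := h x hx
        exact (csInf_le hT hy).trans hyx
    _ = r * sInf S := Real.sInf_smul_of_nonneg hr S

theorem inTangentCoordinates_model_space_of_forall_eq {𝕜 : Type*} [NontriviallyNormedField 𝕜]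
    {F : Type*} [NormedAddCommGroup F] [NormedSpace 𝕜 F]
    {E' : Type*} [NormedAddCommGroup E'] [NormedSpace 𝕜 E']
    {H' : Type*} [TopologicalSpace H'] {I' : ModelWithCorners 𝕜 E' H'}
    {M' : Type*} [TopologicalSpace M'] [ChartedSpace H' M'] [IsManifold I' 1 M']
    (f : F → F) {g : F → M'} {y : M'} (hg : ∀ x, g x = y) (ϕ : F → F →L[𝕜] E') (x₀ : F) :
    inTangentCoordinates 𝓘(𝕜, F) I' f g ϕ x₀ = ϕ := by
  obtain rfl : g = fun _ => y := funext hg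
  ext x v
  rw [inTangentCoordinates_eq _ _ _
      (by simp only [chartAt_self_eq, OpenPartialHomeomorph.refl_source, Set.mem_univ])
      (mem_chart_source H' y),
    ContinuousLinearMap.comp_apply, ContinuousLinearMap.comp_apply,
    tangentBundleCore_coordChange_model_space, ContinuousLinearMap.id_apply]
  exact (tangentBundleCore I' M').coordChange_self _ _ (mem_achart_source H' y) _

section

variable {E : Type*} [NormedAddCommGroup E] [InnerProductSpace ℝ E]
  {G : Type*} [TopologicalSpace G] [ChartedSpace E G] [Group G] [LieGroup 𝓘(ℝ, E) (⊤ : ℕ∞) G]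

noncomputable def leftVelocity (c : ℝ → G) (t : ℝ) : E :=
  mfderiv 𝓘(ℝ, E) 𝓘(ℝ, E) (fun y => (c t)⁻¹ * y) (c t)
    (mfderiv 𝓘(ℝ, ℝ) 𝓘(ℝ, E) c t (show TangentSpace 𝓘(ℝ, ℝ) t from (1 : ℝ)))

theorem leftVelocity_eq_mfderiv {c : ℝ → G} {t : ℝ}
    (hc : MDifferentiableAt 𝓘(ℝ, ℝ) 𝓘(ℝ, E) c t) :
    leftVelocity c t =
      (show ℝ →L[ℝ] E from mfderiv 𝓘(ℝ, ℝ) 𝓘(ℝ, E) (fun s => (c t)⁻¹ * c s) t) 1 := by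
  have hcomp := mfderiv_comp (I' := 𝓘(ℝ, E)) (I'' := 𝓘(ℝ, E)) t
    (mdifferentiableAt_mul_left (a := (c t)⁻¹)) hc
  exact (DFunLike.congr_fun hcomp (show TangentSpace 𝓘(ℝ, ℝ) t from 1)).symm

theorem continuous_leftVelocity {c : ℝ → G} (hc : ContMDiff 𝓘(ℝ, ℝ) 𝓘(ℝ, E) 1 c) :
    Continuous (leftVelocity (E := E) c) := by
  have hF : ContMDiff (𝓘(ℝ, ℝ).prod 𝓘(ℝ, ℝ)) 𝓘(ℝ, E) 1
      (Function.uncurry fun t s => (c t)⁻¹ * c s) :=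
    (hc.comp contMDiff_fst).inv.mul (hc.comp contMDiff_snd)
  have hD : Continuous fun t =>
      (show ℝ →L[ℝ] E from mfderiv 𝓘(ℝ, ℝ) 𝓘(ℝ, E) (fun s => (c t)⁻¹ * c s) t) := by
    refine continuous_iff_continuousAt.2 fun t₀ => ?_
    have hcoord := (hF.contMDiffAt.mfderiv (x₀ := t₀) (fun t s => (c t)⁻¹ * c s) id
      (contMDiffAt_id (n := 0)) (by norm_num)).continuousAt
    -- all these derivatives land in the tangent space at `1`, so no coordinate change occurs
    have hconst : ∀ t, (c t)⁻¹ * c (id t) = 1 := fun t => inv_mul_cancel (c t)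
    convert hcoord using 1
    exact (inTangentCoordinates_model_space_of_forall_eq id hconst _ t₀).symm
  exact ((ContinuousLinearMap.apply ℝ E (1 : ℝ)).continuous.comp hD).congr fun t =>
    (leftVelocity_eq_mfderiv (hc.mdifferentiableAt one_ne_zero)).symm

noncomputable def rightTransDeriv (g : G) : E →L[ℝ] E :=
  (show E →L[ℝ] E from (mfderiv 𝓘(ℝ, E) 𝓘(ℝ, E) (fun y => g⁻¹ * y) g).comp
      (mfderiv 𝓘(ℝ, E) 𝓘(ℝ, E) (fun y => y * g) 1))

theorem mfderiv_conj_one (g : G) :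
    mfderiv 𝓘(ℝ, E) 𝓘(ℝ, E) (fun y => g⁻¹ * (y * g)) 1 = rightTransDeriv (E := E) g := by
  have hL : MDifferentiableAt 𝓘(ℝ, E) 𝓘(ℝ, E) (fun y => g⁻¹ * y) (1 * g) := by
    rw [one_mul]; exact mdifferentiableAt_mul_left
  rw [show (fun y => g⁻¹ * (y * g)) = (fun y => g⁻¹ * y) ∘ (fun y => y * g) from rfl,
    mfderiv_comp (1 : G) hL mdifferentiableAt_mul_right, one_mul]
  rfl

theorem leftVelocity_mul_right {c : ℝ → G} {t : ℝ} (hc : MDifferentiableAt 𝓘(ℝ, ℝ) 𝓘(ℝ, E) c t)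
    (g : G) :
    leftVelocity (E := E) (fun s => c s * g) t = rightTransDeriv g (leftVelocity c t) := by
  have hcg : MDifferentiableAt 𝓘(ℝ, ℝ) 𝓘(ℝ, E) (fun s => c s * g) t :=
    mdifferentiableAt_mul_right.comp t hc
  have hconj : (fun s => (c t * g)⁻¹ * (c s * g)) =
      (fun y => g⁻¹ * (y * g)) ∘ (fun s => (c t)⁻¹ * c s) := by
    funext s; simp only [Function.comp_apply, mul_inv_rev, mul_assoc]
  have hL : MDifferentiableAt 𝓘(ℝ, ℝ) 𝓘(ℝ, E) (fun s => (c t)⁻¹ * c s) t :=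
    mdifferentiableAt_mul_left.comp t hc
  have hC : MDifferentiableAt 𝓘(ℝ, E) 𝓘(ℝ, E) (fun y => g⁻¹ * (y * g)) ((c t)⁻¹ * c t) := by
    rw [inv_mul_cancel]
    exact mdifferentiableAt_mul_left.comp (1 : G) mdifferentiableAt_mul_right
  rw [leftVelocity_eq_mfderiv hcg, leftVelocity_eq_mfderiv hc, hconj, mfderiv_comp t hC hL,
    inv_mul_cancel, mfderiv_conj_one]
  rfl

theorem leftInvPathLength_nonneg (c : ℝ → G) : 0 ≤ leftInvPathLength (E := E) c :=
  intervalIntegral.integral_nonneg zero_le_one fun _ _ => norm_nonneg _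

theorem leftInvPathLength_mul_right_le {c : ℝ → G} (hc : ContMDiff 𝓘(ℝ, ℝ) 𝓘(ℝ, E) 1 c) (g : G) :
    leftInvPathLength (E := E) (fun t => c t * g) ≤
      rightTransNorm (E := E) g * leftInvPathLength (E := E) c := by
  have hv := continuous_leftVelocity hc
  calc ∫ t in (0 : ℝ)..1, ‖leftVelocity (E := E) (fun s => c s * g) t‖
      = ∫ t in (0 : ℝ)..1, ‖rightTransDeriv g (leftVelocity c t)‖ := by
        simp only [leftVelocity_mul_right (hc.mdifferentiableAt one_ne_zero)]
    _ ≤ ∫ t in (0 : ℝ)..1, ‖rightTransDeriv (E := E) g‖ * ‖leftVelocity (E := E) c t‖ :=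
        intervalIntegral.integral_mono_on zero_le_one
          (((rightTransDeriv g).continuous.comp hv).norm.intervalIntegrable _ _)
          ((continuous_const.mul hv.norm).intervalIntegrable _ _)
          fun t _ => (rightTransDeriv g).le_opNorm _
    _ = ‖rightTransDeriv (E := E) g‖ * ∫ t in (0 : ℝ)..1, ‖leftVelocity (E := E) c t‖ :=
        intervalIntegral.integral_const_mul _ _
end

theorem dist_mul_right_le {E : Type*} [NormedAddCommGroup E] [InnerProductSpace ℝ E]
    {G : Type*} [TopologicalSpace G] [ChartedSpace E G] [Group G] [LieGroup 𝓘(ℝ, E) (⊤ : ℕ∞) G]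
    (a b g : G) :
    leftInvDist (E := E) (a * g) (b * g) ≤ rightTransNorm (E := E) g * leftInvDist (E := E) a b := by
  refine Real.sInf_le_mul_sInf (norm_nonneg _) ⟨0, ?_⟩ ?_ ?_
  · rintro _ ⟨c, -, -, -, rfl⟩
    exact leftInvPathLength_nonneg c
  · rintro ⟨_, c, hc, hc0, hc1, -⟩
    exact ⟨_, fun t => c t * g⁻¹, contMDiff_mul_right.comp hc, by simp [hc0], by simp [hc1], rfl⟩
  · rintro _ ⟨c, hc, hc0, hc1, rfl⟩
    exact ⟨_, ⟨fun t => c t * g, contMDiff_mul_right.comp hc, by simp [hc0], by simp [hc1], rfl⟩,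
      leftInvPathLength_mul_right_le hc g⟩
end

section
/- Consider H^n (n ≥ 2) as the solvable Lie group AN from the Iwasawa decomposition, with its left invariant hyperbolic metric of curvature −1 and identity element e. If B_R is the closed geodesic ball centered at e of radius R, then max_{g ∈ B_R} ‖Ad_g‖ = cosh R + sinh R = e^R. -/
/- STATEMENT 15: Consider `Hⁿ` (`n ≥ 2`) in the half-space model
`{x ∈ ℝⁿ : xₙ > 0}` with metric `ds² = (Σ dxᵢ²)/xₙ²`, as the solvable Lie group `AN` of the
Iwasawa decomposition: the group law is `p·q = g_p(q)` where `g_p = a_{pₙ} ∘ n_{(p₁,…,p_{n−1})}`,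
explicitly `(p·q)ⱼ = pⱼ + pₙ qⱼ` for `j < n` and `(p·q)ₙ = pₙ qₙ`; the identity is
`e = (0,…,0,1)`.  If `B_R` is the closed geodesic ball centered at `e` of radius `R ≥ 0` (for
the Riemannian distance, the infimum of hyperbolic lengths `∫ ‖c′(t)‖/cₙ(t) dt` of C¹ paths in
the half-space), then `max_{g ∈ B_R} ‖Ad_g‖ = cosh R + sinh R`, where `Ad_g = d(C_g)_e` and its
operator norm is w.r.t. the hyperbolic inner product at `e`, which is the Euclidean one.
Below `i : Fin n` is the index of the vertical coordinate (`i = n−1`). -/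

noncomputable section

/-- Hyperbolic length of a path in the half-space model. -/
def halfSpaceLength {n : ℕ} (i : Fin n) (c : ℝ → EuclideanSpace ℝ (Fin n)) : ℝ :=
  ∫ t in (0:ℝ)..1, ‖deriv c t‖ / c t i

/-- Hyperbolic (Riemannian) distance in the half-space model. -/
def halfSpaceDist {n : ℕ} (i : Fin n) (p q : EuclideanSpace ℝ (Fin n)) : ℝ :=
  sInf {L | ∃ c : ℝ → EuclideanSpace ℝ (Fin n), ContDiff ℝ 1 c ∧ c 0 = p ∧ c 1 = q ∧
    (∀ t ∈ Set.Icc (0:ℝ) 1, 0 < c t i) ∧ L = halfSpaceLength i c}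

/-- The identity element `e = (0,…,0,1)`. -/
def halfSpaceOne {n : ℕ} (i : Fin n) : EuclideanSpace ℝ (Fin n) := EuclideanSpace.single i 1

/-- The group law `p·q = g_p(q)` of the solvable group `AN`. -/
def halfSpaceMul {n : ℕ} (i : Fin n) (p q : EuclideanSpace ℝ (Fin n)) :
    EuclideanSpace ℝ (Fin n) :=
  WithLp.toLp 2 (fun j => if j = i then p i * q i else p j + p i * q j)

/-- The group inverse `p⁻¹ = g_p⁻¹(e)`. -/
def halfSpaceInv {n : ℕ} (i : Fin n) (p : EuclideanSpace ℝ (Fin n)) :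
    EuclideanSpace ℝ (Fin n) :=
  WithLp.toLp 2 (fun j => if j = i then 1 / p i else -p j / p i)

/-- Conjugation `C_p(q) = p·q·p⁻¹`. -/
def halfSpaceConj {n : ℕ} (i : Fin n) (p q : EuclideanSpace ℝ (Fin n)) :
    EuclideanSpace ℝ (Fin n) :=
  halfSpaceMul i (halfSpaceMul i p q) (halfSpaceInv i p)

/-- `‖Ad_p‖`: the operator norm of `d(C_p)_e`; at `e` the hyperbolic metric is Euclidean. -/
def halfSpaceAdNorm {n : ℕ} (i : Fin n) (p : EuclideanSpace ℝ (Fin n)) : ℝ :=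
  ‖fderiv ℝ (halfSpaceConj i p) (halfSpaceOne i)‖

end

/-
Conjugation by `p` is affine; splitting `v = w + s • e` with `w ⊥ e`, its linear part is
`Ad_p (w + s • e) = (p i • w - s • p') + s • e`, where `p' = p - p i • e`. With `E = e^R`, the
constraint `(‖p‖² + 1) / (2 p i) ≤ cosh R` makes the quadratic form `E² ‖v‖² - ‖Ad_p v‖²` in
`(‖w‖, |s|)` positive semidefinite, so `‖Ad_p‖ ≤ e^R`; at `p = e^R • e` the map multiplies
horizontal vectors by `e^R`.

The constraint holds on `B_R` because `ψ(x) = (‖x‖² + 1) / (2 x i)` is `cosh d(e, x)`: along any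
path `|ψ'| ≤ √(ψ² - 1) · ‖x'‖ / x i`, so `arcosh ψ` grows no faster than hyperbolic length.
-/

open Real Set Filter Topology MeasureTheory
open scoped RealInnerProductSpace

theorem two_mul_mul_le_of_sq_le_mul {A B C a b : ℝ} (hA : 0 ≤ A) (hC : 0 ≤ C)
    (h : B ^ 2 ≤ A * C) : 2 * B * a * b ≤ A * a ^ 2 + C * b ^ 2 := by
  rcases hA.eq_or_lt with rfl | hA
  · obtain rfl : B = 0 := by nlinarith
    nlinarith
  · nlinarith [sq_nonneg (A * a - B * b), mul_nonneg (sub_nonneg.2 h) (sq_nonneg b)]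

theorem add_sq_add_sq_le_of_mul_le {E y m a b : ℝ} (hE : 1 ≤ E) (hy : 0 < y)
    (h : E * (m ^ 2 + y ^ 2 + 1) ≤ y * (E ^ 2 + 1)) :
    (y * a + m * b) ^ 2 + b ^ 2 ≤ E ^ 2 * (a ^ 2 + b ^ 2) := by
  have hquad : (E * y - 1) * (y - E) ≤ 0 := by
    nlinarith [mul_nonneg (by linarith : (0 : ℝ) ≤ E) (sq_nonneg m)]
  have hyE : y ≤ E := by
    by_contra! hc
    nlinarith [mul_pos (by nlinarith : 0 < E * y - 1) (sub_pos.2 hc)]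
  have hEy : 1 ≤ E * y := by
    by_contra! hc
    nlinarith [mul_pos (sub_pos.2 hc) (by nlinarith : 0 < E - y)]
  -- the determinant is at least `(E - y) * (E ^ 3 - y)`
  have hdet : (y * m) ^ 2 ≤ (E ^ 2 - y ^ 2) * (E ^ 2 - m ^ 2 - 1) := by
    nlinarith [mul_nonneg (sub_nonneg.2 hyE) (show 0 ≤ E ^ 3 - y by nlinarith)]
  have hC : 0 ≤ E ^ 2 - m ^ 2 - 1 := by
    nlinarith [mul_nonneg (sub_nonneg.2 hyE) (sq_nonneg E), mul_nonneg hy.le (sub_nonneg.2 hEy)]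
  nlinarith [two_mul_mul_le_of_sq_le_mul (a := a) (b := b)
    (sub_nonneg.2 (pow_le_pow_left₀ hy.le hyE 2)) hC hdet]

theorem hasDerivAt_log_add_sqrt_sq_sub_one_add {ε x : ℝ} (hε : 0 < ε) (hx : 1 ≤ x) :
    HasDerivAt (fun y => log (y + √(y ^ 2 - 1 + ε))) (√(x ^ 2 - 1 + ε))⁻¹ x := by
  have hQ : 0 < x ^ 2 - 1 + ε := by nlinarith
  have hsum : 0 < x + √(x ^ 2 - 1 + ε) := by positivity
  have h := ((hasDerivAt_id x).add
    ((((hasDerivAt_pow 2 x).sub_const 1).add_const ε).sqrt hQ.ne')).log hsum.ne'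
  simp only [Pi.add_apply, id] at h
  convert h using 1
  field_simp
  norm_num
  ring

theorem tendsto_log_add_sqrt_sq_sub_one_add {x : ℝ} (hx : 1 ≤ x) :
    Tendsto (fun ε => log (x + √(x ^ 2 - 1 + ε))) (𝓝 0) (𝓝 (arcosh x)) := by
  have hcont : ContinuousAt (fun ε => log (x + √(x ^ 2 - 1 + ε))) 0 :=
    ContinuousAt.log (by fun_prop) (by positivity)
  simpa [arcosh] using hcont.tendsto

theorem arcosh_sub_arcosh_le_integral {u u' s : ℝ → ℝ} {a b : ℝ} (hab : a ≤ b)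
    (hu : ContinuousOn u (Icc a b)) (hu' : ∀ t ∈ Ioo a b, HasDerivAt u (u' t) t)
    (hu1 : ∀ t ∈ Icc a b, 1 ≤ u t) (hs : IntegrableOn s (Icc a b))
    (hs0 : ∀ t ∈ Ioo a b, 0 ≤ s t) (hbound : ∀ t ∈ Ioo a b, u' t ^ 2 ≤ (u t ^ 2 - 1) * s t ^ 2) :
    arcosh (u b) - arcosh (u a) ≤ ∫ t in a..b, s t := by
  -- `arcosh` is not differentiable at `1`: compare with `log (x + √(x ^ 2 - 1 + ε))`, `ε → 0`.
  have hreg : ∀ ε > 0, log (u b + √(u b ^ 2 - 1 + ε)) - log (u a + √(u a ^ 2 - 1 + ε)) ≤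
      ∫ t in a..b, s t := by
    intro ε hε
    refine intervalIntegral.sub_le_integral_of_hasDeriv_right_of_le
      (g := fun t => log (u t + √(u t ^ 2 - 1 + ε)))
      (g' := fun t => (√(u t ^ 2 - 1 + ε))⁻¹ * u' t) hab ?_
      (fun t ht => ((hasDerivAt_log_add_sqrt_sq_sub_one_add hε
        (hu1 t (Ioo_subset_Icc_self ht))).comp t (hu' t ht)).hasDerivWithinAt) hs fun t ht => ?_
    · refine ContinuousOn.log (by fun_prop) fun t ht => ?_
      have := hu1 t ht
      positivity
    · have hQ : 0 < u t ^ 2 - 1 + ε := by nlinarith [hu1 t (Ioo_subset_Icc_self ht)]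
      rw [inv_mul_le_iff₀ (Real.sqrt_pos.2 hQ)]
      calc u' t ≤ √((u t ^ 2 - 1) * s t ^ 2) :=
            (le_abs_self _).trans (Real.abs_le_sqrt (hbound t ht))
        _ ≤ √((u t ^ 2 - 1 + ε) * s t ^ 2) := by gcongr; linarith
        _ = √(u t ^ 2 - 1 + ε) * s t := by rw [Real.sqrt_mul hQ.le, Real.sqrt_sq (hs0 t ht)]
  have hlim := ((tendsto_log_add_sqrt_sq_sub_one_add (hu1 b ⟨hab, le_rfl⟩)).sub
    (tendsto_log_add_sqrt_sq_sub_one_add (hu1 a ⟨le_rfl, hab⟩))).mono_left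
    (nhdsWithin_le_nhds (s := Ioi 0))
  exact le_of_tendsto hlim (eventually_nhdsWithin_of_forall hreg)

noncomputable section

variable {n : ℕ} (i : Fin n)

@[simp]
theorem halfSpaceOne_apply (j : Fin n) : halfSpaceOne i j = if j = i then 1 else 0 := by
  simp [halfSpaceOne]

@[simp]
theorem inner_halfSpaceOne (x : EuclideanSpace ℝ (Fin n)) : ⟪x, halfSpaceOne i⟫ = x i := by
  simp [halfSpaceOne, EuclideanSpace.inner_single_right]

@[simp]
theorem norm_halfSpaceOne : ‖halfSpaceOne i‖ = 1 := by
  simp [halfSpaceOne]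

theorem norm_sq_eq_norm_sub_sq_add_sq (x : EuclideanSpace ℝ (Fin n)) :
    ‖x‖ ^ 2 = ‖x - x i • halfSpaceOne i‖ ^ 2 + x i ^ 2 := by
  rw [norm_sub_sq_real, real_inner_smul_right, norm_smul]
  simp only [inner_halfSpaceOne, norm_eq_abs, norm_halfSpaceOne, mul_one, sq_abs]
  ring

theorem sq_apply_le_norm_sq (x : EuclideanSpace ℝ (Fin n)) : x i ^ 2 ≤ ‖x‖ ^ 2 := by
  rw [norm_sq_eq_norm_sub_sq_add_sq i x]
  exact le_add_of_nonneg_left (sq_nonneg _)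

/-- The adjoint map `Ad_p = d(C_p)_e`. -/
def halfSpaceAd (p : EuclideanSpace ℝ (Fin n)) :
    EuclideanSpace ℝ (Fin n) →L[ℝ] EuclideanSpace ℝ (Fin n) :=
  p i • ContinuousLinearMap.id ℝ _ + (EuclideanSpace.proj i).smulRight (halfSpaceOne i - p)

theorem halfSpaceAd_apply (p v : EuclideanSpace ℝ (Fin n)) :
    halfSpaceAd i p v = p i • v + v i • (halfSpaceOne i - p) := by
  simp [halfSpaceAd]

theorem halfSpaceConj_eq {p : EuclideanSpace ℝ (Fin n)} (hp : p i ≠ 0) :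
    halfSpaceConj i p = fun q => halfSpaceAd i p q + (p - p i • halfSpaceOne i) := by
  funext q; ext j
  simp only [halfSpaceConj, halfSpaceMul, halfSpaceInv, halfSpaceAd_apply, PiLp.add_apply,
    PiLp.sub_apply, PiLp.smul_apply, halfSpaceOne_apply, smul_eq_mul]
  split_ifs with hj
  · subst hj; field_simp; ring
  · field_simp; ring

theorem halfSpaceAdNorm_eq {p : EuclideanSpace ℝ (Fin n)} (hp : p i ≠ 0) :
    halfSpaceAdNorm i p = ‖halfSpaceAd i p‖ := by
  rw [halfSpaceAdNorm, halfSpaceConj_eq i hp,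
    ((halfSpaceAd i p).hasFDerivAt.add_const _).fderiv]

theorem norm_halfSpaceAd_apply_le (p v : EuclideanSpace ℝ (Fin n)) (hp : 0 < p i) :
    ‖halfSpaceAd i p v‖ ^ 2 ≤
      (p i * ‖v - v i • halfSpaceOne i‖ + ‖p - p i • halfSpaceOne i‖ * |v i|) ^ 2 + v i ^ 2 := by
  have hvert : halfSpaceAd i p v i = v i := by
    simp only [halfSpaceAd_apply, PiLp.add_apply, PiLp.smul_apply, smul_eq_mul, PiLp.sub_apply,
      halfSpaceOne_apply, if_true]
    ring
  have hhor : halfSpaceAd i p v - v i • halfSpaceOne i =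
      p i • (v - v i • halfSpaceOne i) - v i • (p - p i • halfSpaceOne i) := by
    rw [halfSpaceAd_apply]; module
  rw [norm_sq_eq_norm_sub_sq_add_sq i, hvert, hhor]
  gcongr
  refine (norm_sub_le _ _).trans ?_
  rw [norm_smul, norm_smul, Real.norm_of_nonneg hp.le, Real.norm_eq_abs, mul_comm |v i|]

theorem norm_halfSpaceAd_le {E : ℝ} (hE : 1 ≤ E) {p : EuclideanSpace ℝ (Fin n)} (hp : 0 < p i)
    (h : E * (‖p‖ ^ 2 + 1) ≤ p i * (E ^ 2 + 1)) : ‖halfSpaceAd i p‖ ≤ E := by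
  refine (halfSpaceAd i p).opNorm_le_bound (by linarith) fun v => ?_
  rw [← pow_le_pow_iff_left₀ (norm_nonneg _) (by positivity) two_ne_zero, mul_pow,
    norm_sq_eq_norm_sub_sq_add_sq i v]
  rw [norm_sq_eq_norm_sub_sq_add_sq i p] at h
  refine (norm_halfSpaceAd_apply_le i p v hp).trans ?_
  rw [← sq_abs (v i)]
  exact add_sq_add_sq_le_of_mul_le hE hp h

theorem le_norm_halfSpaceAd {j : Fin n} (hji : j ≠ i) (p : EuclideanSpace ℝ (Fin n)) :
    |p i| ≤ ‖halfSpaceAd i p‖ := by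
  have hAd : halfSpaceAd i p (EuclideanSpace.single j 1) = p i • EuclideanSpace.single j 1 := by
    simp [halfSpaceAd_apply, hji.symm]
  simpa [hAd, norm_smul] using (halfSpaceAd i p).le_opNorm (EuclideanSpace.single j 1)

theorem norm_halfSpaceAd_smul_one {E : ℝ} (hE : 1 ≤ E) {j : Fin n} (hji : j ≠ i) :
    ‖halfSpaceAd i (E • halfSpaceOne i)‖ = E := by
  have hEi : (E • halfSpaceOne i) i = E := by simp
  refine le_antisymm (norm_halfSpaceAd_le i hE (by rw [hEi]; linarith) ?_) ?_
  · rw [hEi, norm_smul, norm_halfSpaceOne, Real.norm_of_nonneg (by linarith)]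
    nlinarith
  · have h := le_norm_halfSpaceAd i hji (E • halfSpaceOne i)
    rwa [hEi, abs_of_nonneg (by linarith)] at h

/-- `cosh` of the hyperbolic distance from `e` to `x`. -/
def halfSpaceCoshDist (x : EuclideanSpace ℝ (Fin n)) : ℝ := (‖x‖ ^ 2 + 1) / (2 * x i)

def halfSpaceCoshDistGrad (x : EuclideanSpace ℝ (Fin n)) : EuclideanSpace ℝ (Fin n) :=
  (2 * x i ^ 2)⁻¹ • ((2 * x i) • x - (‖x‖ ^ 2 + 1) • halfSpaceOne i)

theorem one_le_halfSpaceCoshDist {x : EuclideanSpace ℝ (Fin n)} (hx : 0 < x i) :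
    1 ≤ halfSpaceCoshDist i x := by
  rw [halfSpaceCoshDist, le_div_iff₀ (by positivity)]
  nlinarith [sq_apply_le_norm_sq i x, sq_nonneg (x i - 1)]

theorem halfSpaceCoshDist_halfSpaceOne : halfSpaceCoshDist i (halfSpaceOne i) = 1 := by
  norm_num [halfSpaceCoshDist]

theorem HasDerivAt.halfSpaceCoshDist_comp {c : ℝ → EuclideanSpace ℝ (Fin n)}
    {v : EuclideanSpace ℝ (Fin n)} {t : ℝ} (hc : HasDerivAt c v t) (hct : c t i ≠ 0) :
    HasDerivAt (fun s => halfSpaceCoshDist i (c s)) ⟪halfSpaceCoshDistGrad i (c t), v⟫ t := by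
  have hci : HasDerivAt (fun s => c s i) (v i) t :=
    (EuclideanSpace.proj (𝕜 := ℝ) i).hasFDerivAt.comp_hasDerivAt t hc
  refine ((hc.norm_sq.add_const 1).div (hci.const_mul 2)
    (mul_ne_zero two_ne_zero hct)).congr_deriv ?_
  simp only [halfSpaceCoshDistGrad, real_inner_smul_left, inner_sub_left,
    real_inner_comm v (halfSpaceOne i), inner_halfSpaceOne]
  field_simp

theorem norm_halfSpaceCoshDistGrad_sq {x : EuclideanSpace ℝ (Fin n)} (hx : x i ≠ 0) :
    ‖halfSpaceCoshDistGrad i x‖ ^ 2 = (halfSpaceCoshDist i x ^ 2 - 1) / x i ^ 2 := by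
  rw [halfSpaceCoshDistGrad, norm_smul, mul_pow, norm_sub_sq_real, norm_smul, norm_smul,
    real_inner_smul_left, real_inner_smul_right, inner_halfSpaceOne, halfSpaceCoshDist]
  simp only [norm_inv, Real.norm_eq_abs, inv_pow, mul_pow, sq_abs, norm_halfSpaceOne]
  field_simp
  ring

theorem sq_inner_halfSpaceCoshDistGrad_le {x : EuclideanSpace ℝ (Fin n)} (hx : 0 < x i)
    (v : EuclideanSpace ℝ (Fin n)) :
    ⟪halfSpaceCoshDistGrad i x, v⟫ ^ 2 ≤ (halfSpaceCoshDist i x ^ 2 - 1) * (‖v‖ / x i) ^ 2 := by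
  calc ⟪halfSpaceCoshDistGrad i x, v⟫ ^ 2 ≤ (‖halfSpaceCoshDistGrad i x‖ * ‖v‖) ^ 2 := by
        rw [← sq_abs]; gcongr; exact abs_real_inner_le_norm _ _
    _ = (halfSpaceCoshDist i x ^ 2 - 1) * (‖v‖ / x i) ^ 2 := by
        rw [mul_pow, norm_halfSpaceCoshDistGrad_sq i hx.ne']; ring

theorem arcosh_halfSpaceCoshDist_le_length {c : ℝ → EuclideanSpace ℝ (Fin n)}
    (hc : ContDiff ℝ 1 c) (hc0 : c 0 = halfSpaceOne i) (hpos : ∀ t ∈ Icc (0 : ℝ) 1, 0 < c t i) :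
    arcosh (halfSpaceCoshDist i (c 1)) ≤ halfSpaceLength i c := by
  have hderiv : ∀ t ∈ Icc (0 : ℝ) 1, HasDerivAt (fun s => halfSpaceCoshDist i (c s))
      ⟪halfSpaceCoshDistGrad i (c t), deriv c t⟫ t := fun t ht =>
    ((hc.differentiable one_ne_zero t).hasDerivAt).halfSpaceCoshDist_comp i (hpos t ht).ne'
  have hspeed : ContinuousOn (fun t => ‖deriv c t‖ / c t i) (Icc 0 1) :=
    ((hc.continuous_deriv le_rfl).norm.continuousOn).div
      (((EuclideanSpace.proj (𝕜 := ℝ) i).continuous.comp hc.continuous).continuousOn)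
      fun t ht => (hpos t ht).ne'
  have h := arcosh_sub_arcosh_le_integral zero_le_one
    (fun t ht => (hderiv t ht).continuousAt.continuousWithinAt)
    (fun t ht => hderiv t (Ioo_subset_Icc_self ht))
    (fun t ht => one_le_halfSpaceCoshDist i (hpos t ht)) hspeed.integrableOn_Icc
    (fun t ht => div_nonneg (norm_nonneg _) (hpos t (Ioo_subset_Icc_self ht)).le)
    (fun t ht => sq_inner_halfSpaceCoshDistGrad_le i (hpos t (Ioo_subset_Icc_self ht)) _)
  rwa [hc0, halfSpaceCoshDist_halfSpaceOne, arcosh_zero, sub_zero] at h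

theorem arcosh_halfSpaceCoshDist_le_halfSpaceDist {p : EuclideanSpace ℝ (Fin n)} (hp : 0 < p i) :
    arcosh (halfSpaceCoshDist i p) ≤ halfSpaceDist i (halfSpaceOne i) p := by
  refine le_csInf ⟨_, fun t => halfSpaceOne i + t • (p - halfSpaceOne i), by fun_prop, by simp,
    by simp, fun t ht => ?_, rfl⟩ ?_
  · simp only [PiLp.add_apply, PiLp.smul_apply, PiLp.sub_apply, halfSpaceOne_apply, if_true,
      smul_eq_mul]
    rcases ht.2.lt_or_eq with ht1 | rfl
    · nlinarith [ht.1]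
    · linarith
  · rintro L ⟨c, hc, hc0, rfl, hpos, rfl⟩
    exact arcosh_halfSpaceCoshDist_le_length i hc hc0 hpos

theorem halfSpaceCoshDist_le_cosh {p : EuclideanSpace ℝ (Fin n)} (hp : 0 < p i) {R : ℝ}
    (hR : halfSpaceDist i (halfSpaceOne i) p ≤ R) : halfSpaceCoshDist i p ≤ cosh R := by
  have h1 := one_le_halfSpaceCoshDist i hp
  rw [← cosh_arcosh h1, cosh_le_cosh, abs_of_nonneg (arcosh_nonneg h1)]
  exact (arcosh_halfSpaceCoshDist_le_halfSpaceDist i hp).trans (hR.trans (le_abs_self R))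

theorem halfSpaceDist_exp_smul_le {R : ℝ} (hR : 0 ≤ R) :
    halfSpaceDist i (halfSpaceOne i) (exp R • halfSpaceOne i) ≤ R := by
  have hbdd : BddBelow {L | ∃ c : ℝ → EuclideanSpace ℝ (Fin n), ContDiff ℝ 1 c ∧
      c 0 = halfSpaceOne i ∧ c 1 = exp R • halfSpaceOne i ∧
      (∀ t ∈ Icc (0 : ℝ) 1, 0 < c t i) ∧ L = halfSpaceLength i c} := by
    refine ⟨0, ?_⟩
    rintro _ ⟨c, -, -, -, hpos, rfl⟩
    exact intervalIntegral.integral_nonneg zero_le_one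
      fun t ht => div_nonneg (norm_nonneg _) (hpos t ht).le
  have hderiv : ∀ t, HasDerivAt (fun s => exp (s * R) • halfSpaceOne i)
      ((exp (t * R) * R) • halfSpaceOne i) t := fun t =>
    ((hasDerivAt_mul_const R).exp).smul_const _
  refine csInf_le hbdd ⟨fun t => exp (t * R) • halfSpaceOne i, by fun_prop, by simp,
    by simp, fun t _ => by simp [exp_pos], ?_⟩
  rw [halfSpaceLength, intervalIntegral.integral_congr (g := fun _ => R) fun t _ => ?_]
  · simp
  · simp [(hderiv t).deriv, norm_smul, abs_of_nonneg hR, (exp_pos _).ne']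

theorem norm_halfSpaceAd_le_exp {p : EuclideanSpace ℝ (Fin n)} (hp : 0 < p i) {R : ℝ}
    (hR : 0 ≤ R) (h : halfSpaceCoshDist i p ≤ cosh R) : ‖halfSpaceAd i p‖ ≤ exp R := by
  refine norm_halfSpaceAd_le i (one_le_exp hR) hp ?_
  rw [halfSpaceCoshDist, div_le_iff₀ (by positivity), cosh_eq, exp_neg] at h
  calc exp R * (‖p‖ ^ 2 + 1) ≤ exp R * ((exp R + (exp R)⁻¹) / 2 * (2 * p i)) := by gcongr
    _ = p i * (exp R ^ 2 + 1) := by field_simp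

end

theorem sup_adNorm_ball_eq_exp (n : ℕ) (hn : 2 ≤ n) (R : ℝ) (hR : 0 ≤ R) :
    letI i : Fin n := ⟨n - 1, by omega⟩
    sSup (halfSpaceAdNorm i ''
        {p : EuclideanSpace ℝ (Fin n) | 0 < p i ∧ halfSpaceDist i (halfSpaceOne i) p ≤ R}) =
      Real.cosh R + Real.sinh R := by
  generalize (⟨n - 1, by omega⟩ : Fin n) = i
  have : Nontrivial (Fin n) := Fin.nontrivial_iff_two_le.2 hn
  obtain ⟨j, hji⟩ := exists_ne i
  have hp₀ : 0 < (exp R • halfSpaceOne i) i := by simp [exp_pos]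
  rw [cosh_add_sinh]
  refine IsGreatest.csSup_eq ⟨⟨_, ⟨hp₀, halfSpaceDist_exp_smul_le i hR⟩, ?_⟩, ?_⟩
  · rw [halfSpaceAdNorm_eq i hp₀.ne', norm_halfSpaceAd_smul_one i (one_le_exp hR) hji]
  · rintro _ ⟨p, ⟨hp, hpR⟩, rfl⟩
    rw [halfSpaceAdNorm_eq i hp.ne']
    exact norm_halfSpaceAd_le_exp i hp hR (halfSpaceCoshDist_le_cosh i hp hpR)
end

section
/- In the hyperbolic plane H² with polar coordinates (r,θ) centered at a point o, the function v(r,θ) = (C/2) · (∫₀^r sinh s ds / sinh r) · cos θ = (C/2) · ((cosh r − 1)/sinh r) · cos θ is a bounded harmonic function on H², smooth across o, and its gradient satisfies ‖∇v(r,θ)‖ = C / (2(1 + cosh r)) for all r ≥ 0. -/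
open FormalMultilinearSeries

private lemma myRadius (c : ℕ → ℝ) (h : ∀ n, |c n| ≤ ((n.factorial : ℝ))⁻¹) :
    (ofScalars ℝ c).radius = ⊤ := by
  apply FormalMultilinearSeries.radius_eq_top_of_summable_norm
  intro r
  refine Summable.of_nonneg_of_le (fun n => by positivity) (fun n => ?_)
    (Real.summable_pow_div_factorial r)
  rw [ofScalars_norm, Real.norm_eq_abs]
  calc |c n| * (r : ℝ) ^ n ≤ ((n.factorial : ℝ))⁻¹ * (r : ℝ) ^ n := by
        apply mul_le_mul_of_nonneg_right (h n) (by positivity)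
    _ = (r : ℝ) ^ n / n.factorial := by ring

private lemma myContDiff (c : ℕ → ℝ) (h : ∀ n, |c n| ≤ ((n.factorial : ℝ))⁻¹) :
    ContDiff ℝ (⊤ : ℕ∞) (ofScalarsSum (E := ℝ) c) := by
  have hr := myRadius c h
  have hb : HasFPowerSeriesOnBall (ofScalarsSum c) (ofScalars ℝ c) 0 ⊤ := by
    have := (ofScalars ℝ c).hasFPowerSeriesOnBall (by rw [hr]; simp)
    rwa [hr] at this
  rw [contDiff_iff_contDiffAt]
  intro x
  exact (hb.analyticAt_of_mem (by simp [EMetric.mem_ball, edist_lt_top])).contDiffAt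

private lemma myHasSum (c : ℕ → ℝ) (h : ∀ n, |c n| ≤ ((n.factorial : ℝ))⁻¹) (t : ℝ) :
    HasSum (fun n => c n * t ^ n) (ofScalarsSum (E := ℝ) c t) := by
  have h2 := (ofScalars ℝ c).hasSum (x := t)
    (by rw [myRadius c h]; simp [EMetric.mem_ball, edist_lt_top])
  have he : (fun n => (ofScalars ℝ c n) fun _ => t) = fun n => c n * t ^ n := by
    funext n
    rw [ofScalars_apply_eq, smul_eq_mul]
  rw [he] at h2
  exact h2

private lemma hasSum_sinh' (x : ℝ) :
    HasSum (fun n : ℕ => x ^ (2 * n + 1) / (2 * n + 1).factorial) (Real.sinh x) := by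
  rw [← Complex.hasSum_ofReal]
  have h := (Complex.hasSum_sin' ((x : ℂ) * Complex.I)).mul_right Complex.I
  rw [Complex.sin_mul_I] at h
  have h2 : ∀ n : ℕ, ((x : ℂ) * Complex.I * Complex.I) ^ (2 * n + 1) / ((2 * n + 1).factorial : ℂ)
      / Complex.I * Complex.I = -((x ^ (2 * n + 1) / ((2 * n + 1).factorial : ℝ) : ℝ) : ℂ) := by
    intro n
    rw [div_mul_cancel₀ _ Complex.I_ne_zero]
    have hx : (x : ℂ) * Complex.I * Complex.I = -(x : ℂ) := by
      rw [mul_assoc, Complex.I_mul_I, mul_neg_one]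
    rw [hx, Odd.neg_pow ⟨n, by ring⟩]
    push_cast
    ring
  have h3 := h.neg
  have h4 : (fun n : ℕ => ((x ^ (2 * n + 1) / ((2 * n + 1).factorial : ℝ) : ℝ) : ℂ))
      = fun n : ℕ => -(((x : ℂ) * Complex.I * Complex.I) ^ (2 * n + 1) / ((2 * n + 1).factorial : ℂ)
        / Complex.I * Complex.I) := by
    funext n; rw [h2 n, neg_neg]
  rw [h4]
  have h5 : -(Complex.sinh (x : ℂ) * Complex.I * Complex.I) = ((Real.sinh x : ℝ) : ℂ) := by
    rw [mul_assoc, Complex.I_mul_I, mul_neg_one, neg_neg, Complex.ofReal_sinh]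
  rw [← h5]
  exact h3

private lemma hasSum_cosh' (x : ℝ) :
    HasSum (fun n : ℕ => x ^ (2 * n) / (2 * n).factorial) (Real.cosh x) := by
  rw [← Complex.hasSum_ofReal]
  have h := Complex.hasSum_cos' ((x : ℂ) * Complex.I)
  rw [Complex.cos_mul_I, ← Complex.ofReal_cosh] at h
  have h2 : (fun n : ℕ => ((x ^ (2 * n) / ((2 * n).factorial : ℝ) : ℝ) : ℂ))
      = fun n : ℕ => ((x : ℂ) * Complex.I * Complex.I) ^ (2 * n) / ((2 * n).factorial : ℂ) := by
    funext n
    have hx : (x : ℂ) * Complex.I * Complex.I = -(x : ℂ) := by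
      rw [mul_assoc, Complex.I_mul_I, mul_neg_one]
    rw [hx, Even.neg_pow ⟨n, by ring⟩]
    push_cast
    ring
  rw [h2]
  exact h

private lemma hbS : ∀ n : ℕ, |(((2 * n + 1).factorial : ℝ))⁻¹| ≤ ((n.factorial : ℝ))⁻¹ := by
  intro n
  rw [abs_of_nonneg (by positivity)]
  apply inv_anti₀ (by positivity)
  exact_mod_cast Nat.factorial_le (by omega)

private lemma hbC : ∀ n : ℕ, |(((2 * n).factorial : ℝ))⁻¹| ≤ ((n.factorial : ℝ))⁻¹ := by
  intro n
  rw [abs_of_nonneg (by positivity)]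
  apply inv_anti₀ (by positivity)
  exact_mod_cast Nat.factorial_le (by omega)

noncomputable def mySh : ℝ → ℝ := ofScalarsSum (E := ℝ) (fun n => (((2 * n + 1).factorial : ℝ))⁻¹)
noncomputable def myCh : ℝ → ℝ := ofScalarsSum (E := ℝ) (fun n => (((2 * n).factorial : ℝ))⁻¹)

private lemma mySh_eq (r : ℝ) : r * mySh (r ^ 2) = Real.sinh r := by
  have h1 := (myHasSum _ hbS (r ^ 2)).mul_left r
  have h2 : (fun n : ℕ => r * ((((2 * n + 1).factorial : ℝ))⁻¹ * (r ^ 2) ^ n))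
      = fun n : ℕ => r ^ (2 * n + 1) / (2 * n + 1).factorial := by
    funext n; rw [← pow_mul]; ring
  rw [h2] at h1
  exact h1.unique (hasSum_sinh' r)

private lemma myCh_eq (r : ℝ) : myCh (r ^ 2) = Real.cosh r := by
  have h1 := myHasSum _ hbC (r ^ 2)
  have h2 : (fun n : ℕ => (((2 * n).factorial : ℝ))⁻¹ * (r ^ 2) ^ n)
      = fun n : ℕ => r ^ (2 * n) / (2 * n).factorial := by
    funext n; rw [← pow_mul]; ring
  rw [h2] at h1
  exact h1.unique (hasSum_cosh' r)

private lemma g_hasDerivAt {s : ℝ} (hs : 0 < s) :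
    HasDerivAt (fun u => (Real.cosh u - 1) / Real.sinh u)
      ((Real.cosh s - 1) / Real.sinh s ^ 2) s := by
  have hsinh := Real.sinh_pos_iff.mpr hs
  have h := ((Real.hasDerivAt_cosh s).sub_const 1).div (Real.hasDerivAt_sinh s) hsinh.ne'
  refine h.congr_deriv ?_
  have hsq := Real.sinh_sq s
  field_simp
  nlinarith [Real.sinh_sq s]

private lemma g2_hasDerivAt {s : ℝ} (hs : 0 < s) :
    HasDerivAt (fun u => (Real.cosh u - 1) / Real.sinh u ^ 2)
      (-((Real.cosh s - 1) ^ 2 / Real.sinh s ^ 3)) s := by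
  have hsinh := Real.sinh_pos_iff.mpr hs
  have hden : Real.sinh s ^ 2 ≠ 0 := by positivity
  have h := ((Real.hasDerivAt_cosh s).sub_const 1).div ((Real.hasDerivAt_sinh s).pow 2) hden
  refine h.congr_deriv ?_
  simp only [Pi.pow_apply, Nat.cast_ofNat, Nat.add_one_sub_one, pow_one]
  field_simp
  nlinarith [Real.sinh_sq s]

theorem harmonic_function_on_H2 (C : ℝ) (hC : 0 < C) (v : ℝ → ℝ → ℝ)
    (hv : ∀ r θ, v r θ = C / 2 * ((Real.cosh r - 1) / Real.sinh r) * Real.cos θ)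
    (F : ℝ × ℝ → ℝ)
    (hF : ∀ p : ℝ × ℝ, F p =
      C / 2 * ((Real.cosh (Real.sqrt (p.1 ^ 2 + p.2 ^ 2)) - 1) /
          Real.sinh (Real.sqrt (p.1 ^ 2 + p.2 ^ 2))) *
        (p.1 / Real.sqrt (p.1 ^ 2 + p.2 ^ 2))) :
    (∀ r > (0:ℝ), ∀ θ : ℝ,
      deriv (fun s => deriv (fun s' => v s' θ) s) r
        + Real.cosh r / Real.sinh r * deriv (fun s => v s θ) r
        + 1 / Real.sinh r ^ 2 * deriv (fun φ => deriv (fun φ' => v r φ') φ) θ = 0) ∧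
    (∀ r θ : ℝ, |v r θ| ≤ C / 2) ∧
    ContDiff ℝ (⊤ : ℕ∞) F ∧
    (∀ r > (0:ℝ), ∀ θ : ℝ,
      Real.sqrt ((deriv (fun s => v s θ) r) ^ 2
          + (deriv (fun φ => v r φ) θ) ^ 2 / Real.sinh r ^ 2) =
        C / (2 * (1 + Real.cosh r))) := by
  -- first derivative in r
  have hd1 : ∀ θ : ℝ, ∀ s : ℝ, 0 < s → deriv (fun s' => v s' θ) s
      = C / 2 * ((Real.cosh s - 1) / Real.sinh s ^ 2) * Real.cos θ := by
    intro θ s hs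
    have hvθ : (fun s' => v s' θ)
        = fun s' => C / 2 * ((Real.cosh s' - 1) / Real.sinh s') * Real.cos θ :=
      funext fun s' => hv s' θ
    rw [hvθ]
    exact (((g_hasDerivAt hs).const_mul (C / 2)).mul_const (Real.cos θ)).deriv
  -- first derivative in θ
  have hdθ : ∀ r φ : ℝ, deriv (fun φ' => v r φ') φ
      = -(C / 2 * ((Real.cosh r - 1) / Real.sinh r)) * Real.sin φ := by
    intro r φ
    have hfun : (fun φ' => v r φ')
        = fun φ' => (C / 2 * ((Real.cosh r - 1) / Real.sinh r)) * Real.cos φ' :=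
      funext fun φ' => hv r φ'
    rw [hfun]
    rw [((Real.hasDerivAt_cos φ).const_mul (C / 2 * ((Real.cosh r - 1) / Real.sinh r))).deriv]
    ring
  refine ⟨?_, ?_, ?_, ?_⟩
  · -- harmonicity
    intro r hr θ
    have hS := Real.sinh_pos_iff.mpr hr
    have hev : (fun s => deriv (fun s' => v s' θ) s) =ᶠ[nhds r]
        (fun s => C / 2 * ((Real.cosh s - 1) / Real.sinh s ^ 2) * Real.cos θ) := by
      filter_upwards [isOpen_Ioi.eventually_mem (Set.mem_Ioi.mpr hr)] with s hs
      exact hd1 θ s hs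
    rw [hev.deriv_eq]
    rw [(((g2_hasDerivAt hr).const_mul (C / 2)).mul_const (Real.cos θ)).deriv]
    rw [hd1 θ r hr]
    have hθ2 : (fun φ => deriv (fun φ' => v r φ') φ)
        = fun φ => -(C / 2 * ((Real.cosh r - 1) / Real.sinh r)) * Real.sin φ :=
      funext (hdθ r)
    rw [hθ2]
    rw [((Real.hasDerivAt_sin θ).const_mul
      (-(C / 2 * ((Real.cosh r - 1) / Real.sinh r)))).deriv]
    field_simp
    ring
  · -- boundedness
    intro r θ
    rw [hv]
    have hq : |(Real.cosh r - 1) / Real.sinh r| ≤ 1 := by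
      rw [abs_div]
      apply div_le_one_of_le₀ ?_ (abs_nonneg _)
      rw [abs_of_nonneg (by nlinarith [Real.one_le_cosh r])]
      rcases le_total 0 r with h | h
      · have h1 := Real.cosh_sub_sinh r
        have h2 : Real.exp (-r) ≤ 1 := Real.exp_le_one_iff.mpr (by linarith)
        have h3 : Real.sinh r ≤ |Real.sinh r| := le_abs_self _
        linarith
      · have h1 := Real.cosh_add_sinh r
        have h2 : Real.exp r ≤ 1 := Real.exp_le_one_iff.mpr h
        have h3 : -Real.sinh r ≤ |Real.sinh r| := neg_le_abs _
        linarith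
    rw [abs_mul, abs_mul]
    have hc2 : |C / 2| = C / 2 := abs_of_nonneg (by positivity)
    calc |C / 2| * |(Real.cosh r - 1) / Real.sinh r| * |Real.cos θ|
        ≤ C / 2 * 1 * 1 := by
          rw [hc2]; gcongr
          all_goals first
            | exact hq
            | exact Real.abs_cos_le_one θ
      _ = C / 2 := by ring
  · -- smoothness
    have hSh := myContDiff _ hbS
    have hCh := myContDiff _ hbC
    have hq : ContDiff ℝ (⊤ : ℕ∞) (fun p : ℝ × ℝ => p.1 ^ 2 + p.2 ^ 2) :=
      (contDiff_fst.pow 2).add (contDiff_snd.pow 2)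
    have hFG : F = fun p : ℝ × ℝ =>
        C / 2 * p.1 * mySh (p.1 ^ 2 + p.2 ^ 2) / (1 + myCh (p.1 ^ 2 + p.2 ^ 2)) := by
      funext p
      rw [hF]
      set x := p.1
      set y := p.2
      have hxy : (0:ℝ) ≤ x ^ 2 + y ^ 2 := by positivity
      set r := Real.sqrt (x ^ 2 + y ^ 2) with hrdef
      have hr2 : r ^ 2 = x ^ 2 + y ^ 2 := Real.sq_sqrt hxy
      have hch : myCh (x ^ 2 + y ^ 2) = Real.cosh r := by rw [← hr2, myCh_eq]
      have hsh : r * mySh (x ^ 2 + y ^ 2) = Real.sinh r := by rw [← hr2, mySh_eq]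
      rcases eq_or_lt_of_le hxy with h0 | h0
      · -- x = y = 0
        have hx : x = 0 := by nlinarith
        have hr0 : r = 0 := by rw [hrdef, ← h0, Real.sqrt_zero]
        rw [hx, hr0]
        simp [Real.sinh_zero]
      · have hrpos : 0 < r := Real.sqrt_pos.mpr h0
        have hspos := Real.sinh_pos_iff.mpr hrpos
        have hcosh : (0:ℝ) < 1 + Real.cosh r := by nlinarith [Real.one_le_cosh r]
        rw [hch]
        have hshval : mySh (x ^ 2 + y ^ 2) = Real.sinh r / r := by
          field_simp at hsh ⊢
          linarith [hsh]
        rw [hshval]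
        have hsq := Real.sinh_sq r
        field_simp
        linear_combination (-x) * hsq
    rw [hFG]
    apply ContDiff.div
    · exact (contDiff_const.mul contDiff_fst).mul ((hSh).comp hq)
    · exact contDiff_const.add ((hCh).comp hq)
    · intro p
      have hxy : (0:ℝ) ≤ p.1 ^ 2 + p.2 ^ 2 := by positivity
      have hr2 : (Real.sqrt (p.1 ^ 2 + p.2 ^ 2)) ^ 2 = p.1 ^ 2 + p.2 ^ 2 := Real.sq_sqrt hxy
      have hch : myCh (p.1 ^ 2 + p.2 ^ 2) = Real.cosh (Real.sqrt (p.1 ^ 2 + p.2 ^ 2)) := by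
        have h := myCh_eq (Real.sqrt (p.1 ^ 2 + p.2 ^ 2))
        rwa [hr2] at h
      rw [hch]
      nlinarith [Real.one_le_cosh (Real.sqrt (p.1 ^ 2 + p.2 ^ 2))]
  · -- gradient
    intro r hr θ
    have hS := Real.sinh_pos_iff.mpr hr
    have hcosh : (0:ℝ) < 1 + Real.cosh r := by nlinarith [Real.one_le_cosh r]
    rw [hd1 θ r hr, hdθ r θ]
    have key : (C / 2 * ((Real.cosh r - 1) / Real.sinh r ^ 2) * Real.cos θ) ^ 2
        + (-(C / 2 * ((Real.cosh r - 1) / Real.sinh r)) * Real.sin θ) ^ 2 / Real.sinh r ^ 2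
        = (C / (2 * (1 + Real.cosh r))) ^ 2 := by
      have hsq : Real.sinh r ^ 2 = (Real.cosh r - 1) * (Real.cosh r + 1) := by
        nlinarith [Real.sinh_sq r]
      have hpyth := Real.sin_sq_add_cos_sq θ
      field_simp
      linear_combination (Real.cosh r ^ 2 - 1) ^ 2 * hpyth
        - (Real.sinh r ^ 2 + Real.cosh r ^ 2 - 1) * hsq
    rw [key, Real.sqrt_sq (by positivity)]
end

section
/- For n ≥ 2 and C > 0, the function v on H^n defined in polar coordinates (r, θ, φ₁, …, φ_{n−2}) centered at o by v(r,θ) = (C(n−1)/2) · (∫₀^r (sinh s)^{n−1} ds / (sinh r)^{n−1}) · cos θ is harmonic: it satisfies ∂²v/∂r² + (n−1) coth r · ∂v/∂r + (n−2)(cot θ/sinh²r) ∂v/∂θ + (1/sinh²r) ∂²v/∂θ² = 0 for r > 0. -/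
/-! Writing `m = n - 1`, the function separates as `v = K · g(r) · cos θ` with
`g(r) = (∫₀^r sinh^m) / sinh^m r`. Since `(sinh^m g)' = sinh^m`, the profile solves the first-order
equation `g' = 1 - m coth r · g`; differentiating once more, with `coth' = -1/sinh²`, gives
`g'' + m coth r · g' = m g / sinh² r`. The angular terms contribute
`-((n - 2) + 1) g cos θ / sinh² r = -m g cos θ / sinh² r`, which cancels it. -/

open Real Filter Topology

noncomputable section

namespace HyperbolicHarmonic

def radialProfile (m : ℕ) (r : ℝ) : ℝ :=
  (∫ s in (0 : ℝ)..r, sinh s ^ m) / sinh r ^ m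

lemma hasDerivAt_integral_sinh_pow (m : ℕ) (r : ℝ) :
    HasDerivAt (fun x => ∫ s in (0 : ℝ)..x, sinh s ^ m) (sinh r ^ m) r :=
  have hc : Continuous fun s => sinh s ^ m := continuous_sinh.pow m
  intervalIntegral.integral_hasDerivAt_right (hc.intervalIntegrable _ _)
    (hc.stronglyMeasurableAtFilter _ _) hc.continuousAt

lemma hasDerivAt_coth {r : ℝ} (hr : r ≠ 0) :
    HasDerivAt (fun x => cosh x / sinh x) (-1 / sinh r ^ 2) r := by
  refine ((hasDerivAt_cosh r).div (hasDerivAt_sinh r) (sinh_ne_zero.2 hr)).congr_deriv ?_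
  rw [← cosh_sq_sub_sinh_sq r]
  ring

lemma hasDerivAt_radialProfile (m : ℕ) {r : ℝ} (hr : r ≠ 0) :
    HasDerivAt (radialProfile m) (1 - m * (cosh r / sinh r * radialProfile m r)) r := by
  have hsinh : sinh r ≠ 0 := sinh_ne_zero.2 hr
  refine ((hasDerivAt_integral_sinh_pow m r).div ((hasDerivAt_sinh r).fun_pow m)
    (pow_ne_zero m hsinh)).congr_deriv ?_
  rcases m with _ | m
  · simp [radialProfile]
  · simp only [radialProfile, Nat.add_sub_cancel, pow_succ]
    field_simp

lemma deriv_radialProfile_eventuallyEq (m : ℕ) {r : ℝ} (hr : r ≠ 0) :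
    deriv (radialProfile m) =ᶠ[𝓝 r]
      fun x => 1 - m * (cosh x / sinh x * radialProfile m x) := by
  filter_upwards [isOpen_ne.mem_nhds hr] with x hx
  exact (hasDerivAt_radialProfile m hx).deriv

theorem radialProfile_ode (m : ℕ) {r : ℝ} (hr : r ≠ 0) :
    deriv (deriv (radialProfile m)) r + m * (cosh r / sinh r) * deriv (radialProfile m) r =
      m * radialProfile m r / sinh r ^ 2 := by
  have hg := hasDerivAt_radialProfile m hr
  have hg' := (((hasDerivAt_coth hr).fun_mul hg).const_mul (m : ℝ)).const_sub 1
  rw [(deriv_radialProfile_eventuallyEq m hr).deriv_eq, hg.deriv, hg'.deriv]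
  field_simp
  ring

end HyperbolicHarmonic

open HyperbolicHarmonic

theorem harmonic_function_on_Hn_general (n : ℕ) (hn : 2 ≤ n) (C : ℝ) (v : ℝ → ℝ → ℝ)
    (hv : ∀ r θ, v r θ =
      C * ((n : ℝ) - 1) / 2 *
        ((∫ s in (0:ℝ)..r, Real.sinh s ^ (n - 1)) / Real.sinh r ^ (n - 1)) * Real.cos θ) :
    ∀ r > (0:ℝ), ∀ θ : ℝ, Real.sin θ ≠ 0 →
      deriv (fun s => deriv (fun s' => v s' θ) s) r
        + ((n : ℝ) - 1) * (Real.cosh r / Real.sinh r) * deriv (fun s => v s θ) r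
        + ((n : ℝ) - 2) * (Real.cos θ / Real.sin θ / Real.sinh r ^ 2) *
            deriv (fun φ => v r φ) θ
        + 1 / Real.sinh r ^ 2 * deriv (fun φ => deriv (fun φ' => v r φ') φ) θ = 0 := by
  intro r hr θ hθ
  obtain ⟨m, rfl⟩ : ∃ m, n = m + 1 := ⟨n - 1, by omega⟩
  obtain rfl : v = fun r θ => C * ((↑(m + 1) : ℝ) - 1) / 2 * radialProfile m r * cos θ := by
    funext r θ
    simp only [hv, radialProfile, Nat.add_sub_cancel]
  have hode := radialProfile_ode m hr.ne'
  simp only [deriv_mul_const_field', deriv_const_mul_field', deriv_cos',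
    deriv.fun_neg, Real.deriv_sin]
  rw [eq_sub_of_add_eq hode]
  push_cast
  field_simp
  ring

theorem harmonic_function_on_Hn (n : ℕ) (hn : 2 ≤ n) (C : ℝ) (hC : 0 < C) (v : ℝ → ℝ → ℝ)
    (hv : ∀ r θ, v r θ =
      C * ((n : ℝ) - 1) / 2 *
        ((∫ s in (0:ℝ)..r, Real.sinh s ^ (n - 1)) / Real.sinh r ^ (n - 1)) * Real.cos θ) :
    ∀ r > (0:ℝ), ∀ θ : ℝ, Real.sin θ ≠ 0 →
      deriv (fun s => deriv (fun s' => v s' θ) s) r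
        + ((n : ℝ) - 1) * (Real.cosh r / Real.sinh r) * deriv (fun s => v s θ) r
        + ((n : ℝ) - 2) * (Real.cos θ / Real.sin θ / Real.sinh r ^ 2) *
            deriv (fun φ => v r φ) θ
        + 1 / Real.sinh r ^ 2 * deriv (fun φ => deriv (fun φ' => v r φ') φ) θ = 0 :=
  harmonic_function_on_Hn_general n hn C v hv
end
end

section
/- For n ≥ 2 and C > 0, let v(r,θ) = (C(n−1)/2) · (∫₀^r (sinh s)^{n−1} ds)/(sinh r)^{n−1} · cos θ on H^n. Then lim_{R→∞} e^R · sup_{θ} ‖∇v(R,θ)‖ = C, where ‖∇v(r,θ)‖² = |∂_r v|² + |∂_θ v|²/sinh²r. In particular v is a bounded non-constant harmonic function on H^n whose gradient decays exactly like C e^{−R}. -/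
/-!
Write `v = K F(r) cos θ` with `m = n - 1`, `K = C m / 2`, `I(r) = ∫₀^r sinh^m` and
`F = I / sinh^m`, so that `F' = 1 - m cosh r · F / sinh r` and the squared gradient norm is
`K² (F'² cos² θ + (F / sinh r)² sin² θ)`, with supremum `K² max(F'², (F / sinh r)²)` over `θ`.
Comparing derivatives of both sides gives the sandwich
`sinh^{m+1} r / (m cosh r + 1) ≤ I(r) ≤ sinh^{m+1} r / (m cosh r)`,
which is exactly `0 ≤ F' ≤ F / sinh r`. So the supremum is attained at `θ = π / 2`, and the
same sandwich traps `e^R F(R) / sinh R` between `e^R / (m cosh R + 1)` and `e^R / (m cosh R)`,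
both of which tend to `2 / m`.
-/

open Real Filter Set Topology

lemma tendsto_exp_div_mul_cosh_add {a : ℝ} (ha : 0 < a) (c : ℝ) :
    Tendsto (fun r => exp r / (a * cosh r + c)) atTop (𝓝 (2 / a)) := by
  have hg : ContinuousAt (fun t : ℝ => (a * (1 + t ^ 2) / 2 + c * t)⁻¹) 0 :=
    ContinuousAt.inv₀ (by fun_prop) (by simp [ha.ne'])
  convert hg.tendsto.comp tendsto_exp_neg_atTop_nhds_zero using 2 with r
  · rw [Function.comp_apply, ← inv_div, cosh_eq, exp_neg]
    field_simp
  · simp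

lemma hasDerivAt_sinh_pow_succ (m : ℕ) (x : ℝ) :
    HasDerivAt (fun s => sinh s ^ (m + 1)) ((m + 1) * sinh x ^ m * cosh x) x := by
  simpa using (hasDerivAt_sinh x).fun_pow (m + 1)

lemma le_integral_sinh_pow {m : ℕ} (hm : m ≠ 0) {r : ℝ} (hr : 0 ≤ r) :
    sinh r ^ (m + 1) / (m * cosh r + 1) ≤ ∫ s in (0 : ℝ)..r, sinh s ^ m := by
  have hden : ∀ s, 0 < m * cosh s + 1 := fun s => by positivity
  have hderiv : ∀ s, HasDerivAt (fun s => sinh s ^ (m + 1) / (m * cosh s + 1))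
      (((m + 1) * sinh s ^ m * cosh s * (m * cosh s + 1) - sinh s ^ (m + 1) * (m * sinh s))
        / (m * cosh s + 1) ^ 2) s := fun s =>
    (hasDerivAt_sinh_pow_succ m s).div (((hasDerivAt_cosh s).const_mul _).add_const 1)
      (hden s).ne'
  have := intervalIntegral.sub_le_integral_of_hasDeriv_right_of_le (φ := fun s => sinh s ^ m) hr
    (fun s _ => (hderiv s).continuousAt.continuousWithinAt) (fun s _ => (hderiv s).hasDerivWithinAt)
    ((continuous_sinh.pow m).integrableOn_Icc) fun s hs => ?_
  · simpa using this
  have hm1 : (1 : ℝ) ≤ m := by exact_mod_cast Nat.one_le_iff_ne_zero.mpr hm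
  -- the gap is `(m - 1) (cosh s - 1)`, by `sinh² = cosh² - 1`
  have hkey : (m + 1) * cosh s * (m * cosh s + 1) - m * sinh s ^ 2 ≤ (m * cosh s + 1) ^ 2 := by
    nlinarith [cosh_sq s, one_le_cosh s]
  calc _ = sinh s ^ m * (((m + 1) * cosh s * (m * cosh s + 1) - m * sinh s ^ 2)
          / (m * cosh s + 1) ^ 2) := by ring
    _ ≤ sinh s ^ m := mul_le_of_le_one_right (pow_nonneg (sinh_nonneg_iff.mpr hs.1.le) m)
          ((div_le_one (by positivity [hden s])).mpr hkey)

lemma integral_sinh_pow_le {m : ℕ} (hm : m ≠ 0) {r : ℝ} (hr : 0 ≤ r) :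
    ∫ s in (0 : ℝ)..r, sinh s ^ m ≤ sinh r ^ (m + 1) / (m * cosh r) := by
  have hden : ∀ s, 0 < m * cosh s := fun s => by
    have : (0:ℝ) < m := by exact_mod_cast Nat.pos_of_ne_zero hm
    positivity
  have hderiv : ∀ s, HasDerivAt (fun s => sinh s ^ (m + 1) / (m * cosh s))
      (((m + 1) * sinh s ^ m * cosh s * (m * cosh s) - sinh s ^ (m + 1) * (m * sinh s))
        / (m * cosh s) ^ 2) s := fun s =>
    (hasDerivAt_sinh_pow_succ m s).div ((hasDerivAt_cosh s).const_mul _) (hden s).ne'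
  have := intervalIntegral.integral_le_sub_of_hasDeriv_right_of_le (φ := fun s => sinh s ^ m) hr
    (fun s _ => (hderiv s).continuousAt.continuousWithinAt) (fun s _ => (hderiv s).hasDerivWithinAt)
    ((continuous_sinh.pow m).integrableOn_Icc) fun s hs => ?_
  · simpa using this
  -- the gap is `m`, by `sinh² = cosh² - 1`
  have hkey : (m * cosh s) ^ 2 ≤ (m + 1) * cosh s * (m * cosh s) - m * sinh s ^ 2 := by
    nlinarith [cosh_sq s, one_le_cosh s]
  calc sinh s ^ m ≤ sinh s ^ m * (((m + 1) * cosh s * (m * cosh s) - m * sinh s ^ 2)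
          / (m * cosh s) ^ 2) := le_mul_of_one_le_right (pow_nonneg (sinh_nonneg_iff.mpr hs.1.le) m)
          ((one_le_div (by positivity [hden s])).mpr hkey)
    _ = _ := by ring

noncomputable def radialProfile (m : ℕ) (r : ℝ) : ℝ :=
  (∫ s in (0 : ℝ)..r, sinh s ^ m) / sinh r ^ m

@[simp]
lemma radialProfile_zero (m : ℕ) : radialProfile m 0 = 0 := by
  simp [radialProfile]

lemma radialProfile_nonneg (m : ℕ) {r : ℝ} (hr : 0 ≤ r) : 0 ≤ radialProfile m r :=
  div_nonneg
    (intervalIntegral.integral_nonneg hr fun _ hs => pow_nonneg (sinh_nonneg_iff.2 hs.1) m)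
    (pow_nonneg (sinh_nonneg_iff.2 hr) m)

lemma radialProfile_div_sinh_eq (m : ℕ) (r : ℝ) :
    radialProfile m r / sinh r = (∫ s in (0 : ℝ)..r, sinh s ^ m) / sinh r ^ (m + 1) := by
  rw [radialProfile, div_div, pow_succ]

lemma inv_mul_cosh_add_one_le_radialProfile_div_sinh {m : ℕ} (hm : m ≠ 0) {r : ℝ}
    (hr : 0 < r) : (m * cosh r + 1)⁻¹ ≤ radialProfile m r / sinh r := by
  rw [radialProfile_div_sinh_eq, le_div_iff₀ (pow_pos (sinh_pos_iff.2 hr) _), inv_mul_eq_div]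
  exact le_integral_sinh_pow hm hr.le

lemma radialProfile_div_sinh_le {m : ℕ} (hm : m ≠ 0) {r : ℝ} (hr : 0 < r) :
    radialProfile m r / sinh r ≤ (m * cosh r)⁻¹ := by
  rw [radialProfile_div_sinh_eq, div_le_iff₀ (pow_pos (sinh_pos_iff.2 hr) _), inv_mul_eq_div]
  exact integral_sinh_pow_le hm hr.le

lemma radialProfile_pos {m : ℕ} (hm : m ≠ 0) {r : ℝ} (hr : 0 < r) : 0 < radialProfile m r := by
  have h := inv_mul_cosh_add_one_le_radialProfile_div_sinh hm hr
  have hs := sinh_pos_iff.2 hr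
  rw [le_div_iff₀ hs] at h
  exact lt_of_lt_of_le (mul_pos (inv_pos.2 (by positivity)) hs) h

lemma radialProfile_le {m : ℕ} (hm : m ≠ 0) {r : ℝ} (hr : 0 ≤ r) :
    radialProfile m r ≤ (m : ℝ)⁻¹ := by
  rcases hr.eq_or_lt with rfl | hr
  · simp
  calc radialProfile m r ≤ (m * cosh r)⁻¹ * sinh r :=
        (div_le_iff₀ (sinh_pos_iff.2 hr)).1 (radialProfile_div_sinh_le hm hr)
    _ ≤ (m * cosh r)⁻¹ * cosh r := by gcongr; exact (sinh_lt_cosh r).le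
    _ = (m : ℝ)⁻¹ := by field_simp [(cosh_pos r).ne']

lemma hasDerivAt_radialProfile {m : ℕ} (hm : m ≠ 0) {r : ℝ} (hr : r ≠ 0) :
    HasDerivAt (radialProfile m) (1 - m * cosh r * (radialProfile m r / sinh r)) r := by
  obtain ⟨k, rfl⟩ := Nat.exists_eq_add_one_of_ne_zero hm
  have hs : sinh r ≠ 0 := sinh_ne_zero.2 hr
  have h := ((continuous_sinh.fun_pow (k + 1)).integral_hasStrictDerivAt 0 r).hasDerivAt.div
    (hasDerivAt_sinh_pow_succ k r) (pow_ne_zero _ hs)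
  refine h.congr_deriv ?_
  rw [radialProfile]
  push_cast
  field_simp
  ring

lemma abs_deriv_radialProfile_le {m : ℕ} (hm : m ≠ 0) {r : ℝ} (hr : 0 < r) :
    |deriv (radialProfile m) r| ≤ radialProfile m r / sinh r := by
  have hlow := inv_mul_cosh_add_one_le_radialProfile_div_sinh hm hr
  have hup := radialProfile_div_sinh_le hm hr
  have hc : 0 < (m : ℝ) * cosh r := by
    have : (0:ℝ) < m := by exact_mod_cast Nat.pos_of_ne_zero hm
    positivity
  rw [inv_le_iff_one_le_mul₀ (by positivity)] at hlow
  rw [← one_div, le_div_iff₀' hc] at hup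
  rw [(hasDerivAt_radialProfile hm hr.ne').deriv, abs_le]
  constructor <;> nlinarith

lemma tendsto_exp_mul_radialProfile_div_sinh {m : ℕ} (hm : m ≠ 0) :
    Tendsto (fun r => exp r * (radialProfile m r / sinh r)) atTop (𝓝 (2 / m)) := by
  have hm0 : (0 : ℝ) < m := by exact_mod_cast Nat.pos_of_ne_zero hm
  have hup : Tendsto (fun r => exp r / (m * cosh r)) atTop (𝓝 (2 / m)) := by
    simpa using tendsto_exp_div_mul_cosh_add hm0 0
  refine tendsto_of_tendsto_of_tendsto_of_le_of_le' (tendsto_exp_div_mul_cosh_add hm0 1) hup ?_ ?_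
  all_goals filter_upwards [eventually_gt_atTop 0] with r hr
  · rw [div_eq_mul_inv (exp r)]
    gcongr
    exact inv_mul_cosh_add_one_le_radialProfile_div_sinh hm hr
  · rw [div_eq_mul_inv (exp r)]
    gcongr
    exact radialProfile_div_sinh_le hm hr

lemma sSup_range_sqrt_sq_mul_cos_add_sq_mul_sin (a b : ℝ) :
    sSup (range fun θ => √((a * cos θ) ^ 2 + (b * sin θ) ^ 2)) = max |a| |b| := by
  refine IsGreatest.csSup_eq ⟨?_, ?_⟩
  · rcases le_total |a| |b| with h | h
    · exact ⟨π / 2, by simp [max_eq_right h, sqrt_sq_eq_abs]⟩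
    · exact ⟨0, by simp [max_eq_left h, sqrt_sq_eq_abs]⟩
  · rintro _ ⟨θ, rfl⟩
    rw [sqrt_le_left (le_max_of_le_left (abs_nonneg a))]
    have ha : a ^ 2 ≤ max |a| |b| ^ 2 := by rw [← sq_abs]; gcongr; exact le_max_left _ _
    have hb : b ^ 2 ≤ max |a| |b| ^ 2 := by rw [← sq_abs b]; gcongr; exact le_max_right _ _
    nlinarith [sin_sq_add_cos_sq θ, mul_le_mul_of_nonneg_right ha (sq_nonneg (cos θ)),
      mul_le_mul_of_nonneg_right hb (sq_nonneg (sin θ))]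

lemma sSup_gradient_norm_mul_cos {f : ℝ → ℝ} {R : ℝ} (hf : DifferentiableAt ℝ f R) (A ρ : ℝ) :
    sSup (range fun θ => √((deriv (fun s => A * f s * cos θ) R) ^ 2
      + (deriv (fun φ => A * f R * cos φ) θ) ^ 2 / ρ ^ 2))
      = |A| * max |deriv f R| |f R / ρ| := by
  have hr θ : deriv (fun s => A * f s * cos θ) R = A * deriv f R * cos θ :=
    ((hf.hasDerivAt.const_mul A).mul_const _).deriv
  have hθ θ : deriv (fun φ => A * f R * cos φ) θ = A * f R * -sin θ :=
    ((hasDerivAt_cos θ).const_mul _).deriv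
  calc _ = sSup (range fun θ =>
        √((A * deriv f R * cos θ) ^ 2 + (A * (f R / ρ) * sin θ) ^ 2)) := by
        congr! 3 with θ
        rw [hr, hθ]
        congr 1
        ring
    _ = _ := by
        rw [sSup_range_sqrt_sq_mul_cos_add_sq_mul_sin, abs_mul, abs_mul,
          mul_max_of_nonneg _ _ (abs_nonneg A)]

theorem gradient_decay_exactly_exponential (n : ℕ) (hn : 2 ≤ n) (C : ℝ) (hC : 0 < C)
    (v : ℝ → ℝ → ℝ)
    (hv : ∀ r θ, v r θ =
      C * ((n : ℝ) - 1) / 2 *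
        ((∫ s in (0:ℝ)..r, Real.sinh s ^ (n - 1)) / Real.sinh r ^ (n - 1)) * Real.cos θ) :
    Filter.Tendsto (fun R : ℝ =>
        Real.exp R * sSup (Set.range fun θ : ℝ =>
          Real.sqrt ((deriv (fun s => v s θ) R) ^ 2
            + (deriv (fun φ => v R φ) θ) ^ 2 / Real.sinh R ^ 2)))
      Filter.atTop (nhds C) ∧
    (∃ M : ℝ, ∀ r θ : ℝ, 0 ≤ r → |v r θ| ≤ M) ∧
    (∃ (r r' θ θ' : ℝ), 0 ≤ r ∧ 0 ≤ r' ∧ v r θ ≠ v r' θ') := by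
  obtain ⟨m, rfl⟩ : ∃ m, n = m + 1 := ⟨n - 1, by omega⟩
  have hm : m ≠ 0 := by omega
  set K := C * m / 2 with hK
  have hK0 : 0 < K := by positivity
  obtain rfl : v = fun r θ => K * radialProfile m r * cos θ := by
    funext r θ
    rw [hv, radialProfile, hK]
    push_cast
    simp
  refine ⟨?_, ⟨K / m, fun r θ hr => ?_⟩, ⟨1, 0, 0, 0, zero_le_one, le_rfl, ?_⟩⟩
  · have hKC : K * (2 / m) = C := by
      rw [hK]
      field_simp
    rw [← hKC]
    refine ((tendsto_exp_mul_radialProfile_div_sinh hm).const_mul K).congr' ?_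
    filter_upwards [eventually_gt_atTop 0] with R hR
    have hderiv := abs_deriv_radialProfile_le hm hR
    rw [sSup_gradient_norm_mul_cos (hasDerivAt_radialProfile hm hR.ne').differentiableAt,
      abs_of_pos hK0, abs_of_nonneg ((abs_nonneg _).trans hderiv), max_eq_right hderiv]
    ring
  · have hF := radialProfile_nonneg m hr
    calc |K * radialProfile m r * cos θ| = K * radialProfile m r * |cos θ| := by
          rw [abs_mul, abs_of_nonneg (by positivity)]
      _ ≤ K * (m : ℝ)⁻¹ * 1 := by
          gcongr
          exacts [radialProfile_le hm hr, abs_cos_le_one θ]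
      _ = K / m := by ring
  · simpa using (mul_pos hK0 (radialProfile_pos hm one_pos)).ne'
end
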